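/- arXiv:math/0112118 — 5 statements merged into one kernel-verified Lean document; each statement's English description precedes it below -/
import Mathlib

section
/- The q-norm N = a0² + a1² + (1/2)·λ+·(a2² + a3²) is central: N commutes with each of the generators a0, a1, a2, a3. -/
private lemma aux_sq {A : Type*} [Ring A] [Algebra ℂ A] (c : ℂ) (x y : A)
    (h : x * y = c • (y * x)) : x * (y * y) = (c * c) • (y * y * x) := by
  rw [← mul_assoc, h, smul_mul_assoc, mul_assoc, h, mul_smul_comm, smul_smul, ← mul_assoc]

private lemma aux_sq2 {A : Type*} [Ring A] [Algebra ℂ A] (c : ℂ) (x y : A)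
    (h : x * y = c • (y * x)) : x * x * y = (c * c) • (y * (x * x)) := by
  rw [mul_assoc, h, mul_smul_comm, ← mul_assoc, h, smul_mul_assoc, smul_smul, mul_assoc]

private lemma aux_cancel {A : Type*} [Ring A] [Algebra ℂ A] (c : ℂ) (hc : c ≠ 0)
    {x y : A} (h : c • x = c • y) : x = y := by
  have := congrArg (fun z => c⁻¹ • z) h
  simpa [smul_smul, inv_mul_cancel₀ hc] using this

/-- The q-norm `N = a0² + a1² + (1/2)·λ₊·(a2² + a3²)` is central:
it commutes with each of the generators `a0, a1, a2, a3`. -/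
theorem stmt_1 {A : Type*} [Ring A] [Algebra ℂ A] (q : ℝ) (hq : q ≠ 0)
    (a0 a1 a2 a3 : A)
    (hp2 : (a0 + Complex.I • a1) * a2 = (q : ℂ) • (a2 * (a0 + Complex.I • a1)))
    (hp3 : (a0 + Complex.I • a1) * a3 = (q : ℂ) • (a3 * (a0 + Complex.I • a1)))
    (hm2 : (a0 - Complex.I • a1) * a2 = ((q⁻¹ : ℝ) : ℂ) • (a2 * (a0 - Complex.I • a1)))
    (hm3 : (a0 - Complex.I • a1) * a3 = ((q⁻¹ : ℝ) : ℂ) • (a3 * (a0 - Complex.I • a1)))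
    (h23 : a2 * a3 = a3 * a2)
    (h01 : a0 * a1 = a1 * a0 -
      ((Complex.I / 2) * ((q - q⁻¹ : ℝ) : ℂ)) • (a2 ^ 2 + a3 ^ 2))
    (N : A)
    (hN : N = a0 ^ 2 + a1 ^ 2 +
      ((1 / 2 : ℂ) * ((q + q⁻¹ : ℝ) : ℂ)) • (a2 ^ 2 + a3 ^ 2)) :
    N * a0 = a0 * N ∧ N * a1 = a1 * N ∧ N * a2 = a2 * N ∧ N * a3 = a3 * N := by
  set p := a0 + Complex.I • a1 with hp
  set m := a0 - Complex.I • a1 with hm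
  set S := a2 ^ 2 + a3 ^ 2 with hS
  have hq1 : (q : ℂ) * ((q⁻¹ : ℝ) : ℂ) = 1 := by
    rw [← Complex.ofReal_mul, mul_inv_cancel₀ hq, Complex.ofReal_one]
  have hq1' : ((q⁻¹ : ℝ) : ℂ) * (q : ℂ) = 1 := by rw [mul_comm]; exact hq1
  -- reversed commutation relations
  have w2m : a2 * m = (q : ℂ) • (m * a2) := by rw [hm2, smul_smul, hq1, one_smul]
  have w3m : a3 * m = (q : ℂ) • (m * a3) := by rw [hm3, smul_smul, hq1, one_smul]
  -- p and S
  have pS : p * S = ((q : ℂ) * (q : ℂ)) • (S * p) := by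
    have e2 := aux_sq (q : ℂ) p a2 hp2
    have e3 := aux_sq (q : ℂ) p a3 hp3
    rw [hS, pow_two, pow_two, mul_add, e2, e3, add_mul, smul_add]
  -- S and m
  have Sm : S * m = ((q : ℂ) * (q : ℂ)) • (m * S) := by
    have e2 := aux_sq2 (q : ℂ) a2 m w2m
    have e3 := aux_sq2 (q : ℂ) a3 m w3m
    rw [hS, pow_two, pow_two, add_mul, e2, e3, mul_add, smul_add]
  -- S commutes with a2 and a3
  have Sa2 : S * a2 = a2 * S := by
    have u : a2 ^ 2 * a2 = a2 * a2 ^ 2 := by rw [pow_two, mul_assoc]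
    have t : a3 ^ 2 * a2 = a2 * a3 ^ 2 := by
      rw [pow_two, mul_assoc, ← h23, ← mul_assoc, ← h23, mul_assoc]
    rw [hS, add_mul, u, t, ← mul_add]
  have Sa3 : S * a3 = a3 * S := by
    have u : a3 ^ 2 * a3 = a3 * a3 ^ 2 := by rw [pow_two, mul_assoc]
    have t : a2 ^ 2 * a3 = a3 * a2 ^ 2 := by
      rw [pow_two, mul_assoc, h23, ← mul_assoc, h23, mul_assoc]
    rw [hS, add_mul, u, t, ← mul_add]
  -- two expressions for N
  have hNe : N = p * m + (q : ℂ) • S := by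
    rw [hN, hp, hm]
    simp only [pow_two, mul_sub, add_mul, mul_smul_comm, smul_mul_assoc, smul_smul]
    rw [h01]
    match_scalars
    all_goals (try (push_cast; ring))
    all_goals (simp only [Complex.I_sq, Complex.I_mul_I, mul_one]; push_cast; ring)
  have hNe' : N = m * p + ((q⁻¹ : ℝ) : ℂ) • S := by
    rw [hN, hp, hm]
    simp only [pow_two, mul_sub, sub_mul, mul_add, add_mul, mul_smul_comm,
      smul_mul_assoc, smul_smul]
    rw [h01]
    match_scalars
    all_goals (try (push_cast; ring))
    all_goals (simp only [Complex.I_sq, Complex.I_mul_I, mul_one]; push_cast; ring)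
  have hmp : m * p = N - ((q⁻¹ : ℝ) : ℂ) • S := by rw [hNe', add_sub_cancel_right]
  have hpm : p * m = N - (q : ℂ) • S := by rw [hNe, add_sub_cancel_right]
  have key : ((q⁻¹ : ℝ) : ℂ) * ((q : ℂ) * (q : ℂ)) = (q : ℂ) := by rw [← mul_assoc, hq1', one_mul]
  -- N commutes with p
  have Np : N * p = p * N := by
    calc N * p = (p * m) * p + (q : ℂ) • (S * p) := by rw [hNe, add_mul, smul_mul_assoc]
      _ = p * (m * p) + (q : ℂ) • (S * p) := by rw [mul_assoc]
      _ = p * N - ((q⁻¹ : ℝ) : ℂ) • (p * S) + (q : ℂ) • (S * p) := by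
          rw [hmp, mul_sub, mul_smul_comm]
      _ = p * N - (((q⁻¹ : ℝ) : ℂ) * ((q : ℂ) * (q : ℂ))) • (S * p) + (q : ℂ) • (S * p) := by rw [pS, smul_smul]
      _ = p * N := by rw [key]; abel
  -- N commutes with m
  have Nm : N * m = m * N := by
    calc N * m = (m * p) * m + ((q⁻¹ : ℝ) : ℂ) • (S * m) := by rw [hNe', add_mul, smul_mul_assoc]
      _ = m * (p * m) + ((q⁻¹ : ℝ) : ℂ) • (S * m) := by rw [mul_assoc]
      _ = m * N - (q : ℂ) • (m * S) + ((q⁻¹ : ℝ) : ℂ) • (S * m) := by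
          rw [hpm, mul_sub, mul_smul_comm]
      _ = m * N - (q : ℂ) • (m * S) + (((q⁻¹ : ℝ) : ℂ) * ((q : ℂ) * (q : ℂ))) • (m * S) := by rw [Sm, smul_smul]
      _ = m * N := by rw [key]; abel
  -- N commutes with a2
  have Na2 : N * a2 = a2 * N := by
    calc N * a2 = p * (m * a2) + (q : ℂ) • (S * a2) := by
          rw [hNe, add_mul, smul_mul_assoc, mul_assoc]
      _ = ((q⁻¹ : ℝ) : ℂ) • (p * a2 * m) + (q : ℂ) • (a2 * S) := by
          rw [hm2, mul_smul_comm, Sa2, ← mul_assoc]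
      _ = (((q⁻¹ : ℝ) : ℂ) * (q : ℂ)) • (a2 * (p * m)) + (q : ℂ) • (a2 * S) := by
          rw [hp2, smul_mul_assoc, smul_smul, mul_assoc]
      _ = a2 * N := by
          rw [hq1', one_smul, hNe, mul_add a2 (p * m) ((q : ℂ) • S), mul_smul_comm (q : ℂ) a2 S]
  have Na3 : N * a3 = a3 * N := by
    calc N * a3 = p * (m * a3) + (q : ℂ) • (S * a3) := by
          rw [hNe, add_mul, smul_mul_assoc, mul_assoc]
      _ = ((q⁻¹ : ℝ) : ℂ) • (p * a3 * m) + (q : ℂ) • (a3 * S) := by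
          rw [hm3, mul_smul_comm, Sa3, ← mul_assoc]
      _ = (((q⁻¹ : ℝ) : ℂ) * (q : ℂ)) • (a3 * (p * m)) + (q : ℂ) • (a3 * S) := by
          rw [hp3, smul_mul_assoc, smul_smul, mul_assoc]
      _ = a3 * N := by
          rw [hq1', one_smul, hNe, mul_add a3 (p * m) ((q : ℂ) • S), mul_smul_comm (q : ℂ) a3 S]
  -- recover a0 and a1
  have hsum : p + m = (2 : ℂ) • a0 := by rw [hp, hm]; module
  have hdiff : p - m = (2 * Complex.I) • a1 := by rw [hp, hm]; module
  have Na0 : N * a0 = a0 * N := by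
    apply aux_cancel (2 : ℂ) two_ne_zero
    calc (2 : ℂ) • (N * a0) = N * ((2 : ℂ) • a0) := (mul_smul_comm _ _ _).symm
      _ = N * p + N * m := by rw [← hsum, mul_add]
      _ = p * N + m * N := by rw [Np, Nm]
      _ = ((2 : ℂ) • a0) * N := by rw [← add_mul, hsum]
      _ = (2 : ℂ) • (a0 * N) := smul_mul_assoc _ _ _
  have Na1 : N * a1 = a1 * N := by
    apply aux_cancel (2 * Complex.I) (by simp [Complex.I_ne_zero])
    calc (2 * Complex.I) • (N * a1) = N * ((2 * Complex.I) • a1) :=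
          (mul_smul_comm _ _ _).symm
      _ = N * p - N * m := by rw [← hdiff, mul_sub]
      _ = p * N - m * N := by rw [Np, Nm]
      _ = ((2 * Complex.I) • a1) * N := by rw [← sub_mul, hdiff]
      _ = (2 * Complex.I) • (a1 * N) := smul_mul_assoc _ _ _
  exact ⟨Na0, Na1, Na2, Na3⟩
end

section
/- The quantum determinant of the matrix representation equals the q-norm: (a0 + i·a1)·(a0 − i·a1) + q·(a2 + i·a3)·(a2 − i·a3) = a0² + a1² + (1/2)·λ+·(a2² + a3²). -/
/-- The quantum determinant of the matrix representation equals the q-norm. -/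
theorem stmt_2 {A : Type*} [Ring A] [Algebra ℂ A] (q : ℝ) (hq : q ≠ 0)
    (a0 a1 a2 a3 : A)
    (hp2 : (a0 + Complex.I • a1) * a2 = (q : ℂ) • (a2 * (a0 + Complex.I • a1)))
    (hp3 : (a0 + Complex.I • a1) * a3 = (q : ℂ) • (a3 * (a0 + Complex.I • a1)))
    (hm2 : (a0 - Complex.I • a1) * a2 = ((q⁻¹ : ℝ) : ℂ) • (a2 * (a0 - Complex.I • a1)))
    (hm3 : (a0 - Complex.I • a1) * a3 = ((q⁻¹ : ℝ) : ℂ) • (a3 * (a0 - Complex.I • a1)))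
    (h23 : a2 * a3 = a3 * a2)
    (h01 : a0 * a1 = a1 * a0 -
      ((Complex.I / 2) * ((q - q⁻¹ : ℝ) : ℂ)) • (a2 ^ 2 + a3 ^ 2)) :
    (a0 + Complex.I • a1) * (a0 - Complex.I • a1) +
      (q : ℂ) • ((a2 + Complex.I • a3) * (a2 - Complex.I • a3)) =
    a0 ^ 2 + a1 ^ 2 + ((1 / 2 : ℂ) * ((q + q⁻¹ : ℝ) : ℂ)) • (a2 ^ 2 + a3 ^ 2) := by
  simp only [sq] at h01 ⊢
  simp only [mul_sub, sub_mul, mul_add, add_mul, smul_mul_assoc, mul_smul_comm,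
    smul_add, smul_sub, smul_smul, h01, h23]
  match_scalars <;> simp [Complex.ext_iff] <;> ring
end

section
/- The conjugate quaternion is a two-sided inverse up to the q-norm: with M the 2×2 matrix with rows (a0 + i·a1, a2 + i·a3), (−a2 + i·a3, a0 − i·a1), and M̄ the 2×2 matrix with rows (a0 − i·a1, −(a2* + i·a3*)), (a2* − i·a3*, a0 + i·a1), one has M·M̄ = M̄·M = N·I, where I is the 2×2 identity matrix and N = a0² + a1² + (1/2)·λ+·(a2² + a3²). -/
private lemma I_cubed_aux : Complex.I ^ 3 = -Complex.I := by
  rw [pow_succ, Complex.I_sq]; ring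

/-- The conjugate quaternion is a two-sided inverse up to the q-norm. -/
theorem stmt_7 {A : Type*} [Ring A] [Algebra ℂ A] (q : ℝ) (hq : q ≠ 0)
    (a0 a1 a2 a3 : A)
    (hp2 : (a0 + Complex.I • a1) * a2 = (q : ℂ) • (a2 * (a0 + Complex.I • a1)))
    (hp3 : (a0 + Complex.I • a1) * a3 = (q : ℂ) • (a3 * (a0 + Complex.I • a1)))
    (hm2 : (a0 - Complex.I • a1) * a2 = ((q⁻¹ : ℝ) : ℂ) • (a2 * (a0 - Complex.I • a1)))
    (hm3 : (a0 - Complex.I • a1) * a3 = ((q⁻¹ : ℝ) : ℂ) • (a3 * (a0 - Complex.I • a1)))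
    (h23 : a2 * a3 = a3 * a2)
    (h01 : a0 * a1 = a1 * a0 -
      ((Complex.I / 2) * ((q - q⁻¹ : ℝ) : ℂ)) • (a2 ^ 2 + a3 ^ 2))
    (a2s a3s : A)
    (ha2s : a2s = (1 / 2 : ℂ) • ((((q + q⁻¹ : ℝ) : ℂ)) • a2 -
      (Complex.I * ((q - q⁻¹ : ℝ) : ℂ)) • a3))
    (ha3s : a3s = (Complex.I / 2) • ((((q - q⁻¹ : ℝ) : ℂ)) • a2 -
      (Complex.I * ((q + q⁻¹ : ℝ) : ℂ)) • a3))
    (N : A)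
    (hN : N = a0 ^ 2 + a1 ^ 2 +
      ((1 / 2 : ℂ) * ((q + q⁻¹ : ℝ) : ℂ)) • (a2 ^ 2 + a3 ^ 2)) :
    (!![a0 + Complex.I • a1, a2 + Complex.I • a3;
        -a2 + Complex.I • a3, a0 - Complex.I • a1] : Matrix (Fin 2) (Fin 2) A) *
      !![a0 - Complex.I • a1, -(a2s + Complex.I • a3s);
         a2s - Complex.I • a3s, a0 + Complex.I • a1] = !![N, 0; 0, N] ∧
    (!![a0 - Complex.I • a1, -(a2s + Complex.I • a3s);
        a2s - Complex.I • a3s, a0 + Complex.I • a1] : Matrix (Fin 2) (Fin 2) A) *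
      !![a0 + Complex.I • a1, a2 + Complex.I • a3;
         -a2 + Complex.I • a3, a0 - Complex.I • a1] = !![N, 0; 0, N] := by
  have hq1 : ((q⁻¹ : ℝ) : ℂ) * ((q : ℝ) : ℂ) = 1 := by
    rw [← Complex.ofReal_mul, inv_mul_cancel₀ hq, Complex.ofReal_one]
  have hq2 : ((q : ℝ) : ℂ) * ((q⁻¹ : ℝ) : ℂ) = 1 := by
    rw [← Complex.ofReal_mul, mul_inv_cancel₀ hq, Complex.ofReal_one]
  have h01' : a0 * a1 = a1 * a0 -
      ((Complex.I / 2) * ((q - q⁻¹ : ℝ) : ℂ)) • (a2 * a2 + a3 * a3) := by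
    simpa [pow_two] using h01
  have hN' : N = a0 * a0 + a1 * a1 +
      ((1 / 2 : ℂ) * ((q + q⁻¹ : ℝ) : ℂ)) • (a2 * a2 + a3 * a3) := by
    simpa [pow_two] using hN
  set u := a0 + Complex.I • a1 with hu
  set v := a0 - Complex.I • a1 with hv
  have hA : a2s + Complex.I • a3s = ((q⁻¹ : ℝ) : ℂ) • (a2 + Complex.I • a3) := by
    rw [ha2s, ha3s]; match_scalars <;> (try push_cast) <;> (try ring_nf) <;> (try simp only [Complex.I_sq, I_cubed_aux]) <;> (try push_cast) <;> (try ring)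
  have hB : a2s - Complex.I • a3s = ((q : ℝ) : ℂ) • (a2 - Complex.I • a3) := by
    rw [ha2s, ha3s]; match_scalars <;> (try push_cast) <;> (try ring_nf) <;> (try simp only [Complex.I_sq, I_cubed_aux]) <;> (try push_cast) <;> (try ring)
  have hneg : (-a2 + Complex.I • a3 : A) = -(a2 - Complex.I • a3) := by module
  have hub : u * (a2 + Complex.I • a3) = (q : ℂ) • ((a2 + Complex.I • a3) * u) := by
    rw [mul_add, mul_smul_comm, hp2, hp3, add_mul, smul_mul_assoc]; module
  have huc : u * (a2 - Complex.I • a3) = (q : ℂ) • ((a2 - Complex.I • a3) * u) := by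
    rw [mul_sub, mul_smul_comm, hp2, hp3, sub_mul, smul_mul_assoc]; module
  have hvb : v * (a2 + Complex.I • a3) = ((q⁻¹ : ℝ) : ℂ) • ((a2 + Complex.I • a3) * v) := by
    rw [mul_add, mul_smul_comm, hm2, hm3, add_mul, smul_mul_assoc]; module
  have hvc : v * (a2 - Complex.I • a3) = ((q⁻¹ : ℝ) : ℂ) • ((a2 - Complex.I • a3) * v) := by
    rw [mul_sub, mul_smul_comm, hm2, hm3, sub_mul, smul_mul_assoc]; module
  have hbc : (a2 + Complex.I • a3) * (a2 - Complex.I • a3) = a2 * a2 + a3 * a3 := by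
    simp only [mul_sub, add_mul, smul_mul_assoc, mul_smul_comm, smul_smul]
    rw [h23]; match_scalars <;> (try push_cast) <;> (try ring_nf) <;> (try simp only [Complex.I_sq, I_cubed_aux]) <;> (try push_cast) <;> (try ring)
  have hcb : (a2 - Complex.I • a3) * (a2 + Complex.I • a3) = a2 * a2 + a3 * a3 := by
    simp only [mul_add, sub_mul, smul_mul_assoc, mul_smul_comm, smul_smul]
    rw [h23]; match_scalars <;> (try push_cast) <;> (try ring_nf) <;> (try simp only [Complex.I_sq, I_cubed_aux]) <;> (try push_cast) <;> (try ring)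
  have huv : u * v = a0 * a0 + a1 * a1 -
      ((1 / 2 : ℂ) * ((q - q⁻¹ : ℝ) : ℂ)) • (a2 * a2 + a3 * a3) := by
    rw [hu, hv]
    simp only [mul_sub, add_mul, smul_mul_assoc, mul_smul_comm, smul_smul]
    rw [h01']; match_scalars <;> (try push_cast) <;> (try ring_nf) <;> (try simp only [Complex.I_sq, I_cubed_aux]) <;> (try push_cast) <;> (try ring)
  have hvu : v * u = a0 * a0 + a1 * a1 +
      ((1 / 2 : ℂ) * ((q - q⁻¹ : ℝ) : ℂ)) • (a2 * a2 + a3 * a3) := by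
    rw [hu, hv]
    simp only [mul_add, sub_mul, smul_mul_assoc, mul_smul_comm, smul_smul]
    rw [h01']; match_scalars <;> (try push_cast) <;> (try ring_nf) <;> (try simp only [Complex.I_sq, I_cubed_aux]) <;> (try push_cast) <;> (try ring)
  have E00 : u * v + (a2 + Complex.I • a3) * (a2s - Complex.I • a3s) = N := by
    rw [hB, mul_smul_comm, hbc, huv, hN']; match_scalars <;> (try push_cast) <;> (try ring_nf) <;> (try simp only [Complex.I_sq, I_cubed_aux]) <;> (try push_cast) <;> (try ring)
  have E01 : u * (-(a2s + Complex.I • a3s)) + (a2 + Complex.I • a3) * u = 0 := by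
    rw [hA, mul_neg, mul_smul_comm, hub, smul_smul, hq1, one_smul, neg_add_cancel]
  have E10 : (-a2 + Complex.I • a3) * v + v * (a2s - Complex.I • a3s) = 0 := by
    rw [hneg, hB, mul_smul_comm, hvc, smul_smul, hq2, one_smul, neg_mul, neg_add_cancel]
  have E11 : (-a2 + Complex.I • a3) * (-(a2s + Complex.I • a3s)) + v * u = N := by
    rw [hneg, hA, neg_mul_neg, mul_smul_comm, hcb, hvu, hN']
    match_scalars <;> (try push_cast) <;> (try ring_nf) <;> (try simp only [Complex.I_sq, I_cubed_aux]) <;> (try push_cast) <;> (try ring)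
  have F00 : v * u + (-(a2s + Complex.I • a3s)) * (-a2 + Complex.I • a3) = N := by
    rw [hneg, hA, neg_mul_neg, smul_mul_assoc, hbc, hvu, hN']
    match_scalars <;> (try push_cast) <;> (try ring_nf) <;> (try simp only [Complex.I_sq, I_cubed_aux]) <;> (try push_cast) <;> (try ring)
  have F01 : v * (a2 + Complex.I • a3) + (-(a2s + Complex.I • a3s)) * v = 0 := by
    rw [hA, hvb, neg_mul, smul_mul_assoc, add_neg_cancel]
  have F10 : (a2s - Complex.I • a3s) * u + u * (-a2 + Complex.I • a3) = 0 := by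
    rw [hneg, hB, smul_mul_assoc, mul_neg, huc, add_neg_cancel]
  have F11 : (a2s - Complex.I • a3s) * (a2 + Complex.I • a3) + u * v = N := by
    rw [hB, smul_mul_assoc, hcb, huv, hN']; match_scalars <;> (try push_cast) <;> (try ring_nf) <;> (try simp only [Complex.I_sq, I_cubed_aux]) <;> (try push_cast) <;> (try ring)
  constructor
  · rw [Matrix.mul_fin_two, E00, E01, E10, E11]
  · rw [Matrix.mul_fin_two, F00, F01, F10, F11]
end

section
/- The conjugation preserves the quadratic form on a2, a3: if a2·a3 = a3·a2, then (a2*)² + (a3*)² = a2² + a3². -/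
/-- The conjugation preserves the quadratic form on `a2, a3`. -/
theorem stmt_10 {A : Type*} [Ring A] [Algebra ℂ A] (q : ℝ) (hq : q ≠ 0)
    (a2 a3 a2s a3s : A)
    (ha2s : a2s = (1 / 2 : ℂ) • ((((q + q⁻¹ : ℝ) : ℂ)) • a2 -
      (Complex.I * ((q - q⁻¹ : ℝ) : ℂ)) • a3))
    (ha3s : a3s = (Complex.I / 2) • ((((q - q⁻¹ : ℝ) : ℂ)) • a2 -
      (Complex.I * ((q + q⁻¹ : ℝ) : ℂ)) • a3))
    (h23 : a2 * a3 = a3 * a2) :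
    a2s ^ 2 + a3s ^ 2 = a2 ^ 2 + a3 ^ 2 := by
  have hq' : (q:ℂ) ≠ 0 := Complex.ofReal_ne_zero.mpr hq
  have hinv : (q:ℂ) * (↑q)⁻¹ = 1 := mul_inv_cancel₀ hq'
  subst ha2s ha3s
  simp only [sq, smul_sub, sub_mul, mul_sub, smul_mul_smul_comm, smul_smul, h23]
  match_scalars
  · linear_combination (((q:ℂ) - (↑q)⁻¹)^2/4) * Complex.I_sq + hinv
  · linear_combination (-Complex.I * ((q:ℂ) + (↑q)⁻¹) * ((q:ℂ) - (↑q)⁻¹)/2) * Complex.I_sq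
  · linear_combination ((((q:ℂ) - (↑q)⁻¹)^2)/4 + (Complex.I^2 - 1) * (((q:ℂ) + (↑q)⁻¹)^2)/4) * Complex.I_sq + hinv
end

section
/- Braided addition of q-quaternions: suppose the quadruples (a0, a1, a2, a3) and (b0, b1, b2, b3) each satisfy the GL(1,H_q) relations, and with x±¹ = a0 ± i·a1, y±¹ = a2 ± i·a3, x±² = b0 ± i·b1, y±² = b2 ± i·b3 the following cross relations hold: x+¹x+² = q⁻²·x+²x+¹, x−¹x−² = q⁻²·x−²x−¹, x+¹x−² = x−²x+¹, x+¹bk = q⁻¹·bk·x+¹ and x−¹bk = q⁻¹·bk·x−¹ − λ−·ak·x−² for k = 2, 3, x−²ak = q·ak·x−² and x+²ak = q·ak·x+² + λ−·bk·x+¹ for k = 2, 3, x−¹x+² = x+²x−¹ + λ−·(y+¹y−² + y+²y−¹), y+¹y+² = q⁻²·y+²y+¹, y+¹y−² = y−²y+¹ + λ−·x+¹x−², y−¹y−² = q⁻²·y−²y−¹, y−¹y+² = y+²y−¹ + λ−·x+¹x−². Then the sums ck = ak + bk (k = 0, 1, 2, 3) again satisfy the GL(1,H_q) relations: (c0 +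 i·c1)·ck = q·ck·(c0 + i·c1) and (c0 − i·c1)·ck = q⁻¹·ck·(c0 − i·c1) for k = 2, 3, c2·c3 = c3·c2, and c0·c1 = c1·c0 − (i/2)·λ−·(c2² + c3²). -/
/-- The defining relations of `GL(1,H_q)` for a quadruple of elements of a
unital associative `ℂ`-algebra. -/
def GL1HqRel {A : Type*} [Ring A] [Algebra ℂ A] (q : ℝ) (a0 a1 a2 a3 : A) : Prop :=
  ((a0 + Complex.I • a1) * a2 = (q : ℂ) • (a2 * (a0 + Complex.I • a1))) ∧
  ((a0 + Complex.I • a1) * a3 = (q : ℂ) • (a3 * (a0 + Complex.I • a1))) ∧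
  ((a0 - Complex.I • a1) * a2 = ((q⁻¹ : ℝ) : ℂ) • (a2 * (a0 - Complex.I • a1))) ∧
  ((a0 - Complex.I • a1) * a3 = ((q⁻¹ : ℝ) : ℂ) • (a3 * (a0 - Complex.I • a1))) ∧
  (a2 * a3 = a3 * a2) ∧
  (a0 * a1 = a1 * a0 - ((Complex.I / 2) * ((q - q⁻¹ : ℝ) : ℂ)) • (a2 ^ 2 + a3 ^ 2))

/-- Braided addition of q-quaternions: under the stated cross relations the
componentwise sums again satisfy the `GL(1,H_q)` relations. -/
theorem stmt_17 {A : Type*} [Ring A] [Algebra ℂ A] (q : ℝ) (hq : q ≠ 0)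
    (a0 a1 a2 a3 b0 b1 b2 b3 : A)
    (ha : GL1HqRel q a0 a1 a2 a3)
    (hb : GL1HqRel q b0 b1 b2 b3)
    (x1p x1m y1p y1m x2p x2m y2p y2m : A)
    (hx1p : x1p = a0 + Complex.I • a1) (hx1m : x1m = a0 - Complex.I • a1)
    (hy1p : y1p = a2 + Complex.I • a3) (hy1m : y1m = a2 - Complex.I • a3)
    (hx2p : x2p = b0 + Complex.I • b1) (hx2m : x2m = b0 - Complex.I • b1)
    (hy2p : y2p = b2 + Complex.I • b3) (hy2m : y2m = b2 - Complex.I • b3)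
    (hpp : x1p * x2p = (((q ^ 2)⁻¹ : ℝ) : ℂ) • (x2p * x1p))
    (hmm : x1m * x2m = (((q ^ 2)⁻¹ : ℝ) : ℂ) • (x2m * x1m))
    (hpm : x1p * x2m = x2m * x1p)
    (hpb2 : x1p * b2 = ((q⁻¹ : ℝ) : ℂ) • (b2 * x1p))
    (hpb3 : x1p * b3 = ((q⁻¹ : ℝ) : ℂ) • (b3 * x1p))
    (hmb2 : x1m * b2 = ((q⁻¹ : ℝ) : ℂ) • (b2 * x1m) -
      ((q - q⁻¹ : ℝ) : ℂ) • (a2 * x2m))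
    (hmb3 : x1m * b3 = ((q⁻¹ : ℝ) : ℂ) • (b3 * x1m) -
      ((q - q⁻¹ : ℝ) : ℂ) • (a3 * x2m))
    (hma2 : x2m * a2 = (q : ℂ) • (a2 * x2m))
    (hma3 : x2m * a3 = (q : ℂ) • (a3 * x2m))
    (hpa2 : x2p * a2 = (q : ℂ) • (a2 * x2p) + ((q - q⁻¹ : ℝ) : ℂ) • (b2 * x1p))
    (hpa3 : x2p * a3 = (q : ℂ) • (a3 * x2p) + ((q - q⁻¹ : ℝ) : ℂ) • (b3 * x1p))
    (hmp : x1m * x2p = x2p * x1m +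
      ((q - q⁻¹ : ℝ) : ℂ) • (y1p * y2m + y2p * y1m))
    (hypp : y1p * y2p = (((q ^ 2)⁻¹ : ℝ) : ℂ) • (y2p * y1p))
    (hypm : y1p * y2m = y2m * y1p + ((q - q⁻¹ : ℝ) : ℂ) • (x1p * x2m))
    (hymm : y1m * y2m = (((q ^ 2)⁻¹ : ℝ) : ℂ) • (y2m * y1m))
    (hymp : y1m * y2p = y2p * y1m + ((q - q⁻¹ : ℝ) : ℂ) • (x1p * x2m)) :
    GL1HqRel q (a0 + b0) (a1 + b1) (a2 + b2) (a3 + b3) := by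
  subst hx1p hx1m hy1p hy1m hx2p hx2m hy2p hy2m
  obtain ⟨ha1, ha2, ha3, ha4, ha5, ha6⟩ := ha
  obtain ⟨hb1, hb2, hb3, hb4, hb5, hb6⟩ := hb
  refine ⟨?_, ?_, ?_, ?_, ?_, ?_⟩
  · linear_combination (norm := (push_cast; simp only [pow_two, mul_add, add_mul,
      mul_sub, sub_mul, smul_mul_assoc, mul_smul_comm]; module)) ha1 + hb1 + hpa2 + hpb2
  · linear_combination (norm := (push_cast; simp only [pow_two, mul_add, add_mul,
      mul_sub, sub_mul, smul_mul_assoc, mul_smul_comm]; module)) ha2 + hb2 + hpa3 + hpb3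
  · linear_combination (norm := (push_cast; simp only [pow_two, mul_add, add_mul,
      mul_sub, sub_mul, smul_mul_assoc, mul_smul_comm]; module)) ha3 + hb3 + hma2 + hmb2
  · linear_combination (norm := (push_cast; simp only [pow_two, mul_add, add_mul,
      mul_sub, sub_mul, smul_mul_assoc, mul_smul_comm]; module)) ha4 + hb4 + hma3 + hmb3
  · linear_combination (norm := (push_cast; simp only [pow_two, mul_add, add_mul,
      mul_sub, sub_mul, smul_mul_assoc, mul_smul_comm]; match_scalars <;> (first | ring1 | (simp only [pow_succ, pow_zero, one_mul, mul_one, mul_neg, neg_mul, neg_neg, Complex.I_mul_I, Complex.I_sq]; ring1) | (ring_nf; simp only [pow_succ, pow_zero, one_mul, mul_one, mul_neg, neg_mul, neg_neg, Complex.I_mul_I, Complex.I_sq]; ring1)))) ha5 + hb5 +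
      (Complex.I / 2) • hypm - (Complex.I / 2) • hymp
  · linear_combination (norm := (push_cast; simp only [pow_two, mul_add, add_mul,
      mul_sub, sub_mul, smul_mul_assoc, mul_smul_comm]; match_scalars <;> (first | ring1 | (simp only [pow_succ, pow_zero, one_mul, mul_one, mul_neg, neg_mul, neg_neg, Complex.I_mul_I, Complex.I_sq]; ring1) | (ring_nf; simp only [pow_succ, pow_zero, one_mul, mul_one, mul_neg, neg_mul, neg_neg, Complex.I_mul_I, Complex.I_sq]; ring1)))) ha6 + hb6 +
      (-(Complex.I) / 2) • hmp - (-(Complex.I) / 2) • hpm +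
      (-(Complex.I) * ((q - q⁻¹ : ℝ) : ℂ) / 4) • hypm -
      (-(Complex.I) * ((q - q⁻¹ : ℝ) : ℂ) / 4) • hymp
end
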